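/- Let q_{ji} ∈ ℝ for j,i ∈ {0,1}, let r_0, r_1 ∈ ℝ be strictly positive, and let c_{jk} ∈ ℝ for j,k ∈ {0,1} satisfy c_{0k} ≠ c_{1k} for each k ∈ {0,1}. Then there exists Λ ∈ ℝ such that for every λ ≥ Λ and every b > 0 there exist strictly positive reals α_{jik} (j,i,k ∈ {0,1}) satisfying: (i) r_0·α_{0ik} + r_1·α_{1ik} = r_k·b·(λ + q_{ki}) for all i,k ∈ {0,1}; and (ii) r_0·c_{0k}·(α_{01k} − α_{00k}) = r_1·c_{1k}·(α_{10k} − α_{11k}) for each k ∈ {0,1}. -/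

import Mathlib

/-!
For each `k` the system decouples into two equations `r₀ x_i + r₁ y_i = s_i` together with the
balancing condition, and eliminating `y` shows that balancing forces the difference
`x₁ - x₀ = c₁ (s₀ - s₁) / (r₀ (c₀ - c₁))`. With `s_i = r_k b (λ + q_{ki})` this difference is
`b` times a constant independent of `λ`, while the `s_i` grow linearly in `λ`; so for large `λ`
there is room to choose `x₀` making all four unknowns positive.
-/

open Filter

theorem exists_pos_balanced_split {r : Fin 2 → ℝ} (hr : ∀ j, 0 < r j) {c₀ c₁ : ℝ} (hc : c₀ ≠ c₁)
    {s : Fin 2 → ℝ} (hs : ∀ i, |c₁ * (s 0 - s 1) / (c₀ - c₁)| < s i) :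
    ∃ β : Fin 2 → Fin 2 → ℝ, (∀ j i, 0 < β j i) ∧ (∀ i, r 0 * β 0 i + r 1 * β 1 i = s i) ∧
      r 0 * c₀ * (β 0 1 - β 0 0) = r 1 * c₁ * (β 1 0 - β 1 1) := by
  have hc' : c₀ - c₁ ≠ 0 := sub_ne_zero.mpr hc
  have hr₀ : r 0 ≠ 0 := (hr 0).ne'
  have hr₁ : r 1 ≠ 0 := (hr 1).ne'
  set D := c₁ * (s 0 - s 1) / (c₀ - c₁) with hD
  have hne : max 0 (-D) < min (s 0) (s 1 - D) := by
    refine max_lt_iff.2 ⟨lt_min_iff.2 ⟨?_, ?_⟩, lt_min_iff.2 ⟨?_, ?_⟩⟩ <;>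
      linarith [abs_nonneg D, neg_abs_le D, le_abs_self D, hs 0, hs 1]
  obtain ⟨u, hu_lo, hu_hi⟩ := exists_between hne
  rw [max_lt_iff] at hu_lo
  rw [lt_min_iff] at hu_hi
  -- `v i` is the prospective value of `r 0 * β 0 i`
  set v : Fin 2 → ℝ := ![u, u + D]
  have hv_pos : ∀ i, 0 < v i := Fin.forall_fin_two.2 ⟨hu_lo.1, show 0 < u + D by linarith⟩
  have hv_lt : ∀ i, v i < s i := Fin.forall_fin_two.2 ⟨hu_hi.1, show u + D < s 1 by linarith⟩
  refine ⟨![fun i => v i / r 0, fun i => (s i - v i) / r 1],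
    Fin.forall_fin_two.2 ⟨fun i => div_pos (hv_pos i) (hr 0),
      fun i => div_pos (sub_pos.2 (hv_lt i)) (hr 1)⟩, fun i => ?_, ?_⟩
  · simp only [Matrix.cons_val_zero, Matrix.cons_val_one]
    field_simp
    ring
  · simp only [v, Matrix.cons_val_zero, Matrix.cons_val_one, hD]
    field_simp
    ring

/-- Lemma 5.6 (lem:alphabeta): a linear-algebraic existence statement over ℝ. -/
theorem stmt_0 (q : Fin 2 → Fin 2 → ℝ) (r : Fin 2 → ℝ) (hr : ∀ j, 0 < r j)
    (c : Fin 2 → Fin 2 → ℝ) (hc : ∀ k : Fin 2, c 0 k ≠ c 1 k) :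
    ∃ Λ : ℝ, ∀ lam : ℝ, Λ ≤ lam → ∀ b : ℝ, 0 < b →
      ∃ α : Fin 2 → Fin 2 → Fin 2 → ℝ,
        (∀ j i k, 0 < α j i k) ∧
        (∀ i k : Fin 2, r 0 * α 0 i k + r 1 * α 1 i k = r k * b * (lam + q k i)) ∧
        (∀ k : Fin 2, r 0 * c 0 k * (α 0 1 k - α 0 0 k)
          = r 1 * c 1 k * (α 1 0 k - α 1 1 k)) := by
  set M : Fin 2 → ℝ := fun k => |c 1 k * (r k * (q k 0 - q k 1)) / (c 0 k - c 1 k)|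
  have hlarge : ∀ᶠ lam in atTop, ∀ k i, M k < r k * (lam + q k i) :=
    eventually_all.2 fun k => eventually_all.2 fun i =>
      ((tendsto_atTop_add_const_right _ _ tendsto_id).const_mul_atTop (hr k)).eventually_gt_atTop _
  obtain ⟨Λ, hΛ⟩ := eventually_atTop.1 hlarge
  refine ⟨Λ, fun lam hlam b hb => ?_⟩
  have hsplit : ∀ k, ∃ β : Fin 2 → Fin 2 → ℝ, (∀ j i, 0 < β j i) ∧
      (∀ i, r 0 * β 0 i + r 1 * β 1 i = r k * b * (lam + q k i)) ∧
      r 0 * c 0 k * (β 0 1 - β 0 0) = r 1 * c 1 k * (β 1 0 - β 1 1) := fun k =>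
    exists_pos_balanced_split hr (hc k) fun i => calc
      _ = |b * (c 1 k * (r k * (q k 0 - q k 1)) / (c 0 k - c 1 k))| := by
        congr 1
        ring
      _ = b * M k := by rw [abs_mul, abs_of_pos hb]
      _ < b * (r k * (lam + q k i)) := mul_lt_mul_of_pos_left (hΛ lam hlam k i) hb
      _ = r k * b * (lam + q k i) := by ring
  choose β hβpos hβsum hβbal using hsplit
  exact ⟨fun j i k => β k j i, fun j i k => hβpos k j i, fun i k => hβsum k i, hβbal⟩
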